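/- In any algebra (S,*,') satisfying the three axioms, the identity x = x * (x' * x) holds for all x in S. -/

import Mathlib

/-!
Axiom E3 moves brackets to the right at the cost of a double prime on the last factor.
Expanding `b''` by E1 and reassociating shows `b' * b'' = b' * b`, so the double prime can be
dropped after `b'`; then E3 reads `(x * x') * x = x * (x' * x)`, and E1 finishes.
-/

section TypeTwoOneAlgebra

variable {S : Type*} {m : S → S → S} {i : S → S}

theorem mul_inv_inv_mul_inv_mul_cancel
    (E1 : ∀ x, m (m x (i x)) x = x) (E3 : ∀ x y z, m (m x y) z = m x (m y (i (i z))))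
    (a b : S) : m (m (m a (i (i b))) (i b)) b = m a (i (i b)) := by
  conv_rhs => rw [← E1 (i (i b))]
  rw [← E3, ← E3]

theorem inv_mul_inv_inv
    (E1 : ∀ x, m (m x (i x)) x = x) (E3 : ∀ x y z, m (m x y) z = m x (m y (i (i z))))
    (b : S) : m (i b) (i (i b)) = m (i b) b := by
  simpa only [E1] using (mul_inv_inv_mul_inv_mul_cancel E1 E3 (i b) b).symm

theorem mul_inv_mul_assoc
    (E1 : ∀ x, m (m x (i x)) x = x) (E3 : ∀ x y z, m (m x y) z = m x (m y (i (i z))))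
    (a b : S) : m (m a (i b)) b = m a (m (i b) b) := by
  rw [E3, inv_mul_inv_inv E1 E3]

end TypeTwoOneAlgebra

theorem stmt_general (S : Type*) (m : S → S → S) (i : S → S)
    (E1 : ∀ x, m (m x (i x)) x = x)
    (E3 : ∀ x y z, m (m x y) z = m x (m y (i (i z)))) :
    ∀ x, m x (m (i x) x) = x := by
  intro x
  rw [← mul_inv_mul_assoc E1 E3, E1]

theorem stmt (S : Type*) (m : S → S → S) (i : S → S)
    (E1 : ∀ x, m (m x (i x)) x = x)
    (E2 : ∀ x y, m (m x (i x)) (m (i y) y) = m (m (i y) y) (m x (i x)))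
    (E3 : ∀ x y z, m (m x y) z = m x (m y (i (i z)))) :
    ∀ x, m x (m (i x) x) = x :=
  stmt_general S m i E1 E3
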